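/- The comultiplication formula for nilpotent-at-a-vertex classes: in the twisted Ringel-Hall algebra H_k(Q) of a quiver Q over a finite field k with v^2 = #k, for a vertex i with g_i loops, δ([E_{i,l}]) = ∑_{m+n=l} v^{mn(-1-g_i)} [E_{i,m}] ⊗ [E_{i,n}], where δ([L]) = ∑_{M,N} v^{⟨dim M, dim N⟩} α_{M,N}^L (a_M a_N / a_L) [M] ⊗ [N] and a_M = #Aut(M). -/

import Mathlib

open Finset Module Classical

universe u

/-- A representation of the quiver with vertex set `I` and `c i j` arrows from `i` to `j`
(loops counted by `c i i`), over a field `k`. -/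
structure QRep (k : Type) [Field k] {I : Type} (c : I → I → ℕ) where
  V : I → Type
  [grp : ∀ i, AddCommGroup (V i)]
  [mod : ∀ i, Module k (V i)]
  [fd : ∀ i, FiniteDimensional k (V i)]
  x : ∀ i j, Fin (c i j) → (V i →ₗ[k] V j)

attribute [instance] QRep.grp QRep.mod QRep.fd

variable {k : Type} [Field k] [Fintype k] {I : Type} [Fintype I] [DecidableEq I] {c : I → I → ℕ}

/-- Isomorphism of representations. -/
def QRepIso (M N : QRep k c) : Prop :=
  ∃ e : ∀ i, M.V i ≃ₗ[k] N.V i, ∀ i j a m, e j (M.x i j a m) = N.x i j a (e i m)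

/-- A subrepresentation of `L`. -/
structure QSubRep (L : QRep k c) where
  W : ∀ i, Submodule k (L.V i)
  stable : ∀ i j a, ∀ w ∈ W i, L.x i j a w ∈ W j

/-- The subrepresentation as a representation. -/
def QSubRep.toRep {L : QRep k c} (X : QSubRep L) : QRep k c where
  V i := X.W i
  x i j a := (L.x i j a).restrict (X.stable i j a)

/-- The quotient representation `L/X`. -/
def QSubRep.quotRep {L : QRep k c} (X : QSubRep L) : QRep k c where
  V i := L.V i ⧸ X.W i
  x i j a := Submodule.mapQ (X.W i) (X.W j) (L.x i j a) (fun w hw => X.stable i j a w hw)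

/-- The dimension vector. -/
noncomputable def dimv (M : QRep k c) : I → ℕ := fun i => finrank k (M.V i)

/-- The Euler form `⟨α,β⟩ = ∑_i (1-g_i) d_i d_i' - ∑_{i≠j} c_{ij} d_i d_j'`. -/
def eulerF (c : I → I → ℕ) (d d' : I → ℕ) : ℤ :=
  ∑ i, (1 - (c i i : ℤ)) * d i * d' i
    - ∑ i, ∑ j, (if i = j then 0 else (c i j : ℤ)) * (d i) * (d' j)

/-- The Hall number `α_{M,N}^L = #{X ⊆ L : X ≅ N, L/X ≅ M}`. -/
noncomputable def hallNum (M N L : QRep k c) : ℕ :=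
  Nat.card {X : QSubRep L // QRepIso X.toRep N ∧ QRepIso X.quotRep M}

/-- The coefficient of `[L]` in the twisted Hall product `[M][N]`. -/
noncomputable def prodCoeff (v : ℝ) (M N L : QRep k c) : ℝ :=
  v ^ (eulerF c (dimv M) (dimv N)) * hallNum M N L

/-- The representation `E_{i,l}`: `k^l` at vertex `i`, zero elsewhere, all maps zero. -/
def ERep (i : I) (l : ℕ) : QRep k c where
  V j := Fin (if j = i then l else 0) → k
  x _ _ _ := 0

/-- Direct sum of representations. -/
def dsum (M N : QRep k c) : QRep k c where
  V i := M.V i × N.V i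
  x i j a := (M.x i j a).prodMap (N.x i j a)

/-- Isomorphism is an equivalence relation. -/
instance repSetoid (k : Type) [Field k] {I : Type} (c : I → I → ℕ) [Field k] : Setoid (QRep k c) :=
  ⟨QRepIso, by
    constructor
    · exact fun M => ⟨fun i => LinearEquiv.refl k (M.V i), fun _ _ _ _ => rfl⟩
    · rintro M N ⟨e, he⟩
      exact ⟨fun i => (e i).symm, by
        intro i j a m
        apply (e j).injective
        simp [he i j a ((e i).symm m)]⟩
    · rintro M N P ⟨e, he⟩ ⟨f, hf⟩
      exact ⟨fun i => (e i).trans (f i), by intro i j a m; simp [he, hf]⟩⟩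

/-- Isomorphism classes of representations. -/
def QRepCl (k : Type) [Field k] {I : Type} (c : I → I → ℕ) : Type 1 :=
  Quotient (repSetoid k c)

/-- The basis element `[M]` of the Hall algebra, as a coefficient function on
isomorphism classes. -/
noncomputable def hbasis (M : QRep k c) : QRepCl k c → ℝ :=
  fun L => if L = ⟦M⟧ then 1 else 0

/-- The twisted Hall multiplication, extended bilinearly to coefficient functions. -/
noncomputable def hmul (v : ℝ) (f g : QRepCl k c → ℝ) : QRepCl k c → ℝ :=
  fun L => ∑ᶠ p : QRepCl k c × QRepCl k c,
    f p.1 * g p.2 * prodCoeff v p.1.out p.2.out L.out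

/-- The zero representation. -/
def zeroRep : QRep k c where
  V _ := Fin 0 → k
  x _ _ _ := 0

/-- Powers in the Hall algebra. -/
noncomputable def hpow (v : ℝ) (f : QRepCl k c → ℝ) : ℕ → (QRepCl k c → ℝ)
  | 0 => hbasis zeroRep
  | n + 1 => hmul v f (hpow v f n)

/-- Balanced quantum integer. -/
noncomputable def qint (v : ℝ) (n : ℕ) : ℝ := (v ^ n - v⁻¹ ^ n) / (v - v⁻¹)

/-- Balanced quantum factorial. -/
noncomputable def qfact (v : ℝ) (l : ℕ) : ℝ := ∏ j ∈ Finset.range l, qint v (j + 1)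

/-- Order of the automorphism group of a representation. -/
noncomputable def autNum (M : QRep k c) : ℕ :=
  Nat.card {e : ∀ i, M.V i ≃ₗ[k] M.V i // ∀ i j a m, e j (M.x i j a m) = M.x i j a (e i m)}

/-- The coefficient of `[M] ⊗ [N]` in the Hall-algebra comultiplication `δ([L])`,
namely `v^{⟨dim M, dim N⟩} α_{M,N}^L a_M a_N / a_L`. -/
noncomputable def deltaCoeff (v : ℝ) (M N L : QRep k c) : ℝ :=
  v ^ (eulerF c (dimv M) (dimv N)) * hallNum M N L * autNum M * autNum N / autNum L

/-!
Since `E_{i,l}` has no nonzero arrows, a subrepresentation `X ⊆ E_{i,l}` is just a subspace of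
`k^l` at the vertex `i`, and then `X ≅ E_{i,d}` and `E_{i,l}/X ≅ E_{i,l-d}` with `d = dim X`.
Hence `α^{E_{i,l}}_{M,N}` vanishes unless `M ≅ E_{i,m}`, `N ≅ E_{i,n}` with `m + n = l`, and
`α^{E_{i,m+n}}_{E_{i,m},E_{i,n}} = #Gr(n, m+n)`. Counting linearly independent `n`-tuples in
`k^{m+n}` by the subspace they span gives `#Gr(n, m+n) · #GL_m · #GL_n · q^{mn} = #GL_{m+n}`, so
the coefficient is `v^{(1-g_i)mn} / q^{mn} = v^{mn(-1-g_i)}` because `q = v²`.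
-/

theorem prod_range_add_pow_sub_pow (q m n : ℕ) :
    ∏ t ∈ range (m + n), (q ^ (m + n) - q ^ t)
      = (∏ t ∈ range n, (q ^ (m + n) - q ^ t))
        * (q ^ (m * n) * ∏ t ∈ range m, (q ^ m - q ^ t)) := by
  have shift (t : ℕ) : q ^ (n + m) - q ^ (n + t) = q ^ n * (q ^ m - q ^ t) := by
    rw [Nat.mul_sub, ← pow_add, ← pow_add]
  rw [add_comm m n, prod_range_add, prod_congr rfl fun t _ => shift t, prod_mul_distrib,
    prod_const, card_range, ← pow_mul, mul_comm n m]

theorem Nat.card_eq_card_mul_of_card_fiber {α β : Type} [Finite α] [Fintype β] (f : α → β)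
    {m : ℕ} (h : ∀ b, Nat.card {a // f a = b} = m) : Nat.card α = Nat.card β * m := by
  rw [← Nat.card_congr (Equiv.sigmaFiberEquiv f), Nat.card_sigma, sum_congr rfl fun b _ => h b,
    sum_const, Finset.card_univ, Nat.card_eq_fintype_card, smul_eq_mul]

section FiniteField

variable {V : Type} [AddCommGroup V] [Module k V] [FiniteDimensional k V]

local notation "q" => Fintype.card k

theorem card_linearEquiv_self :
    Nat.card (V ≃ₗ[k] V) = ∏ t ∈ range (finrank k V), (q ^ finrank k V - q ^ t) := by
  let e := LinearEquiv.ofFinrankEq V (Fin (finrank k V) → k) (finrank_fin_fun k).symm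
  rw [← Nat.card_congr (LinearMap.GeneralLinearGroup.generalLinearEquiv k V).toEquiv,
    Nat.card_congr (LinearMap.GeneralLinearGroup.congrLinearEquiv e).toEquiv,
    ← Nat.card_congr Matrix.GeneralLinearGroup.toLin.toEquiv, Matrix.card_GL_field,
    Fin.prod_univ_eq_prod_range (fun t => q ^ finrank k V - q ^ t)]

variable (k) in
def spanOfLinearIndependent (n : ℕ) (s : {s : Fin n → V // LinearIndependent k s}) :
    {W : Submodule k V // finrank k W = n} :=
  ⟨Submodule.span k (Set.range s.1), by rw [finrank_span_eq_card s.2, Fintype.card_fin]⟩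

def spanFiberEquiv {n : ℕ} (W : {W : Submodule k V // finrank k W = n}) :
    {s // spanOfLinearIndependent k n s = W} ≃ {t : Fin n → W.1 // LinearIndependent k t} where
  toFun s :=
    ⟨fun j => ⟨s.1.1 j, congrArg Subtype.val s.2 ▸ Submodule.subset_span ⟨j, rfl⟩⟩,
    .of_comp W.1.subtype s.1.2⟩
  invFun t := ⟨⟨fun j => t.1 j, t.2.map' W.1.subtype W.1.ker_subtype⟩, by
    refine Subtype.ext (Submodule.eq_of_le_of_finrank_le ?_ ?_)
    · exact Submodule.span_le.mpr (Set.range_subset_iff.mpr fun j => (t.1 j).2)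
    · rw [W.2, (spanOfLinearIndependent k n _).2]⟩
  left_inv _ := rfl
  right_inv _ := rfl

theorem card_submodule_finrank_mul {n : ℕ} (hn : n ≤ finrank k V) :
    Nat.card {W : Submodule k V // finrank k W = n} * ∏ t ∈ range n, (q ^ n - q ^ t)
      = ∏ t ∈ range n, (q ^ finrank k V - q ^ t) := by
  have : Finite V := Module.finite_of_finite k
  have : Fintype {W : Submodule k V // finrank k W = n} := Fintype.ofFinite _
  rw [← Fin.prod_univ_eq_prod_range (fun t => q ^ finrank k V - q ^ t),
    ← card_linearIndependent hn]
  refine (Nat.card_eq_card_mul_of_card_fiber (spanOfLinearIndependent k n) fun W => ?_).symm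
  rw [Nat.card_congr (spanFiberEquiv W), card_linearIndependent W.2.ge, W.2,
    Fin.prod_univ_eq_prod_range (fun t => q ^ n - q ^ t)]

end FiniteField

section Representations

omit [Fintype k] [Fintype I] [DecidableEq I]

def QRep.HasZeroArrows (M : QRep k c) : Prop := ∀ i j a, M.x i j a = 0

theorem QRepIso.symm {M N : QRep k c} (h : QRepIso M N) : QRepIso N M :=
  (repSetoid k c).iseqv.symm h

theorem QRepIso.trans {M N P : QRep k c} (h : QRepIso M N) (h' : QRepIso N P) : QRepIso M P :=
  (repSetoid k c).iseqv.trans h h'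

theorem qrepIso_iff_finrank_eq {M N : QRep k c} (hM : M.HasZeroArrows) (hN : N.HasZeroArrows) :
    QRepIso M N ↔ ∀ j, finrank k (M.V j) = finrank k (N.V j) := by
  refine ⟨fun ⟨e, _⟩ j => (e j).finrank_eq, fun h => ?_⟩
  refine ⟨fun j => LinearEquiv.ofFinrankEq _ _ (h j), fun i j a m => ?_⟩
  simp [hM i j a, hN i j a]

theorem QSubRep.hasZeroArrows_toRep {L : QRep k c} (hL : L.HasZeroArrows) (X : QSubRep L) :
    X.toRep.HasZeroArrows := fun i j a =>
  LinearMap.ext fun w => Subtype.ext (LinearMap.congr_fun (hL i j a) (w : X.W i).1)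

theorem QSubRep.hasZeroArrows_quotRep {L : QRep k c} (hL : L.HasZeroArrows) (X : QSubRep L) :
    X.quotRep.HasZeroArrows := fun i j a => by
  simp only [QSubRep.quotRep, hL i j a, Submodule.mapQ_zero]
  rfl

theorem QSubRep.finrank_toRep_V {L : QRep k c} (X : QSubRep L) (j : I) :
    finrank k (X.toRep.V j) = finrank k (X.W j) := rfl

theorem QSubRep.finrank_quotRep_V {L : QRep k c} (X : QSubRep L) (j : I) :
    finrank k (X.quotRep.V j) = finrank k (L.V j ⧸ X.W j) := rfl

def QSubRep.equivOfHasZeroArrows {L : QRep k c} (hL : L.HasZeroArrows) :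
    QSubRep L ≃ ∀ j, Submodule k (L.V j) where
  toFun X := X.W
  invFun W := ⟨W, fun i j a w _ => by simp [hL i j a]⟩
  left_inv _ := rfl
  right_inv _ := rfl

end Representations

section ERep

omit [Fintype k] [Fintype I]

theorem ERep_hasZeroArrows (i : I) (l : ℕ) : (ERep i l : QRep k c).HasZeroArrows :=
  fun _ _ _ => rfl

theorem finrank_ERep (i : I) (l : ℕ) (j : I) :
    finrank k ((ERep i l : QRep k c).V j) = if j = i then l else 0 :=
  finrank_fin_fun k

theorem ERep_subsingleton {i j : I} (l : ℕ) (hj : j ≠ i) :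
    Subsingleton ((ERep i l : QRep k c).V j) := by
  have : IsEmpty (Fin (if j = i then l else 0)) := by rw [if_neg hj]; infer_instance
  exact inferInstanceAs (Subsingleton (Fin (if j = i then l else 0) → k))

theorem QSubRep.toRep_iso_ERep_iff {i : I} {l : ℕ} (X : QSubRep (ERep i l : QRep k c)) (n : ℕ) :
    QRepIso X.toRep (ERep i n) ↔ finrank k (X.W i) = n := by
  rw [qrepIso_iff_finrank_eq (X.hasZeroArrows_toRep (ERep_hasZeroArrows i l))
    (ERep_hasZeroArrows i n)]
  simp only [QSubRep.finrank_toRep_V, finrank_ERep]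
  refine ⟨fun h => by simpa using h i, fun h j => ?_⟩
  have hle := (X.W j).finrank_le
  rw [finrank_ERep] at hle
  split_ifs at hle ⊢ with hj
  · exact hj ▸ h
  · omega

theorem QSubRep.quotRep_iso_ERep_iff {i : I} {l : ℕ} (X : QSubRep (ERep i l : QRep k c))
    (m : ℕ) : QRepIso X.quotRep (ERep i m) ↔ finrank k (X.W i) + m = l := by
  rw [qrepIso_iff_finrank_eq (X.hasZeroArrows_quotRep (ERep_hasZeroArrows i l))
    (ERep_hasZeroArrows i m)]
  simp only [QSubRep.finrank_quotRep_V, finrank_ERep]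
  have hsum j := (X.W j).finrank_quotient_add_finrank
  simp only [finrank_ERep] at hsum
  refine ⟨fun h => ?_, fun h j => ?_⟩
  · have hi := h i
    have hsumi := hsum i
    simp only [if_true] at hi hsumi
    omega
  · have hsumj := hsum j
    split_ifs at hsumj ⊢ with hj
    · subst hj; omega
    · omega

def QSubRep.equivSubmoduleERep (i : I) (l : ℕ) :
    QSubRep (ERep i l : QRep k c) ≃ Submodule k ((ERep i l : QRep k c).V i) :=
  have (j : {j // j ≠ i}) : Subsingleton ((ERep i l : QRep k c).V j) := ERep_subsingleton l j.2
  (QSubRep.equivOfHasZeroArrows (ERep_hasZeroArrows i l)).trans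
    ((Equiv.piSplitAt i _).trans (Equiv.prodUnique _ _))

theorem hallNum_ERep_add (i : I) (m n : ℕ) :
    hallNum (ERep i m : QRep k c) (ERep i n) (ERep i (m + n))
      = Nat.card {W : Submodule k ((ERep i (m + n) : QRep k c).V i) // finrank k W = n} := by
  refine Nat.card_congr ((QSubRep.equivSubmoduleERep i (m + n)).subtypeEquiv fun X => ?_)
  change _ ↔ finrank k (X.W i) = n
  rw [X.toRep_iso_ERep_iff, X.quotRep_iso_ERep_iff]
  exact ⟨And.left, fun h => ⟨h, by omega⟩⟩

theorem hallNum_ERep_eq_zero {i : I} {l : ℕ} {M N : QRep k c}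
    (h : ¬∃ m n : ℕ, m + n = l ∧ QRepIso M (ERep i m) ∧ QRepIso N (ERep i n)) :
    hallNum M N (ERep i l) = 0 := by
  refine Nat.card_eq_zero.mpr (.inl ⟨fun ⟨X, hXN, hXM⟩ => h ?_⟩)
  have hle : finrank k (X.W i) ≤ l := by simpa [finrank_ERep] using (X.W i).finrank_le
  exact ⟨l - finrank k (X.W i), finrank k (X.W i), by omega,
    hXM.symm.trans ((X.quotRep_iso_ERep_iff _).mpr (by omega)),
    hXN.symm.trans ((X.toRep_iso_ERep_iff _).mpr rfl)⟩

end ERep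

omit [Fintype k] in
theorem eulerF_ERep (i : I) (m n : ℕ) :
    eulerF c (dimv (ERep i m : QRep k c)) (dimv (ERep i n : QRep k c))
      = (1 - (c i i : ℤ)) * m * n := by
  have hd (l : ℕ) : dimv (ERep i l : QRep k c) = fun j => if j = i then l else 0 :=
    funext (finrank_ERep i l)
  simp [eulerF, hd, ite_mul, mul_ite]

omit [DecidableEq I] in
theorem autNum_pos (M : QRep k c) : 0 < autNum M := by
  have (j : I) : Finite (M.V j ≃ₗ[k] M.V j) :=
    have : Finite (M.V j) := Module.finite_of_finite k
    Finite.of_injective _ DFunLike.coe_injective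
  have : Nonempty
      {e : ∀ i, M.V i ≃ₗ[k] M.V i // ∀ i j a m, e j (M.x i j a m) = M.x i j a (e i m)} :=
    ⟨⟨fun j => LinearEquiv.refl k _, fun _ _ _ _ => rfl⟩⟩
  exact Nat.card_pos

omit [Fintype k] [DecidableEq I] in
theorem autNum_of_hasZeroArrows {M : QRep k c} (hM : M.HasZeroArrows) :
    autNum M = ∏ j, Nat.card (M.V j ≃ₗ[k] M.V j) := by
  rw [autNum, Nat.card_congr (Equiv.subtypeUnivEquiv fun e i j a m => by simp [hM i j a]),
    Nat.card_pi]

theorem autNum_ERep (i : I) (d : ℕ) :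
    autNum (ERep i d : QRep k c)
      = ∏ t ∈ range d, (Fintype.card k ^ d - Fintype.card k ^ t) := by
  rw [autNum_of_hasZeroArrows (ERep_hasZeroArrows i d), prod_eq_single_of_mem i (mem_univ i)]
  · rw [card_linearEquiv_self, finrank_ERep, if_pos rfl]
  · intro j _ hj
    rw [card_linearEquiv_self, finrank_ERep, if_neg hj, prod_range_zero]

theorem hallNum_mul_autNum_ERep (i : I) (m n : ℕ) :
    hallNum (ERep i m : QRep k c) (ERep i n) (ERep i (m + n)) * autNum (ERep i m : QRep k c)
      * autNum (ERep i n : QRep k c) * Fintype.card k ^ (m * n)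
      = autNum (ERep i (m + n) : QRep k c) := by
  have hGr := card_submodule_finrank_mul (V := (ERep i (m + n) : QRep k c).V i) (n := n)
    (by rw [finrank_ERep, if_pos rfl]; omega)
  rw [finrank_ERep, if_pos rfl] at hGr
  rw [hallNum_ERep_add, autNum_ERep, autNum_ERep, autNum_ERep, prod_range_add_pow_sub_pow, ← hGr]
  ring

theorem hall_comult_Eil_general (v : ℝ) (hvq : v ^ 2 = Fintype.card k)
    (i : I) (l : ℕ) :
    (∀ m n : ℕ, m + n = l →
        deltaCoeff v (ERep i m : QRep k c) (ERep i n) (ERep i l)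
          = v ^ ((m : ℤ) * n * (-1 - (c i i : ℤ)))) ∧
    (∀ M N : QRep k c,
        ¬(∃ m n : ℕ, m + n = l ∧ QRepIso M (ERep i m) ∧ QRepIso N (ERep i n)) →
        deltaCoeff v M N (ERep i l : QRep k c) = 0) := by
  refine ⟨fun m n hmn => ?_, fun M N h => by simp [deltaCoeff, hallNum_ERep_eq_zero h]⟩
  subst hmn
  have hv : v ≠ 0 := ne_of_apply_ne (· ^ 2) (by simp [hvq])
  have hcount : (autNum (ERep i (m + n) : QRep k c) : ℝ)
      = hallNum (ERep i m : QRep k c) (ERep i n) (ERep i (m + n))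
        * autNum (ERep i m : QRep k c) * autNum (ERep i n : QRep k c) * v ^ (2 * (m * n)) := by
    rw [pow_mul, hvq, ← hallNum_mul_autNum_ERep]
    push_cast
    ring
  have hne : (autNum (ERep i (m + n) : QRep k c) : ℝ) ≠ 0 := mod_cast (autNum_pos _).ne'
  have hexp : (1 - (c i i : ℤ)) * m * n = m * n * (-1 - (c i i : ℤ)) + (2 * (m * n) : ℕ) := by
    push_cast; ring
  rw [deltaCoeff, eulerF_ERep, hexp, zpow_add₀ hv, zpow_natCast, div_eq_iff hne, hcount]
  ring

/-- Comultiplication formula for the classes `[E_{i,l}]`: for a vertex `i` with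
`g_i = c i i` loops, `δ([E_{i,l}]) = ∑_{m+n=l} v^{mn(-1-g_i)} [E_{i,m}] ⊗ [E_{i,n}]`,
i.e. the coefficient of `[E_{i,m}] ⊗ [E_{i,n}]` with `m + n = l` is `v^{mn(-1-g_i)}`
and all other coefficients vanish. -/
theorem hall_comult_Eil (v : ℝ) (hv : 0 < v) (hvq : v ^ 2 = Fintype.card k)
    (i : I) (l : ℕ) :
    (∀ m n : ℕ, m + n = l →
        deltaCoeff v (ERep i m : QRep k c) (ERep i n) (ERep i l)
          = v ^ ((m : ℤ) * n * (-1 - (c i i : ℤ)))) ∧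
    (∀ M N : QRep k c,
        ¬(∃ m n : ℕ, m + n = l ∧ QRepIso M (ERep i m) ∧ QRepIso N (ERep i n)) →
        deltaCoeff v M N (ERep i l : QRep k c) = 0) :=
  hall_comult_Eil_general v hvq i l
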